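/- Let ζ = U^a · g(U,V) ∈ ℂ[[U,V]] where g is a unit (g(0,0) ≠ 0) and a ≥ 1, and let F(Z) ∈ ℂ[[X,Y]][Z] be a monic polynomial with F(U^m, V^m, ζ) = 0 of degree n in Z, written F = Z^n + Σ_{l<n} a_l(X,Y) Z^l. If X^{n-l} divides a_l(X,Y) for all l < n (i.e., (X,Z) is equimultiple of order n), then ζ ∈ ℂ[[U,V]] with every exponent (i,j) appearing in ζ satisfying i ≥ m. -/

import Mathlib

/-- The substitution `X ↦ X^m`, `Y ↦ Y^m` on `ℂ[[X,Y]]`, characterized on coefficients. -/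
noncomputable def substPow (m : ℕ) (P : MvPowerSeries (Fin 2) ℂ) : MvPowerSeries (Fin 2) ℂ :=
  fun d => if ∀ i, m ∣ d i then
    MvPowerSeries.coeff (d.mapRange (· / m) (Nat.zero_div m)) P else 0

/-!
Compare the coefficients of `X^(a n)` in `F(ζ) = Σ_l φ(a_l) ζ^l`, where `ζ = X^a g`. If `a < m`,
the term `φ(a_l) ζ^l` with `l < n` is divisible by `X^(m (n - l) + a l)`, a power strictly
above `X^(a n)`, so only `ζ^n = X^(a n) g^n` contributes, with coefficient `g(0)^n ≠ 0`.
Hence `m ≤ a`, and every exponent of `ζ = X^a g` in the variable `X` is at least `a`.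
-/

theorem Finsupp.mapRange_div_eq_iff {σ : Type*} {m : ℕ} (hm : 0 < m) {d : σ →₀ ℕ}
    (hd : ∀ i, m ∣ d i) (e : σ →₀ ℕ) :
    d.mapRange (· / m) (Nat.zero_div m) = e ↔ d = m • e := by
  simp only [Finsupp.ext_iff, Finsupp.mapRange_apply, Finsupp.smul_apply, smul_eq_mul]
  exact forall_congr' fun i => (Nat.div_eq_iff_eq_mul_left hm (hd i)).trans (by rw [mul_comm])

theorem substPow_X_zero {m : ℕ} (hm : 0 < m) :
    substPow m (MvPowerSeries.X 0) = (MvPowerSeries.X 0 : MvPowerSeries (Fin 2) ℂ) ^ m := by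
  classical
  ext d
  change (if ∀ i, m ∣ d i then MvPowerSeries.coeff _ (MvPowerSeries.X 0) else 0) = _
  rw [MvPowerSeries.coeff_X_pow, MvPowerSeries.coeff_X]
  by_cases hd : ∀ i, m ∣ d i
  · simp only [if_pos hd, Finsupp.mapRange_div_eq_iff hm hd, Finsupp.smul_single, smul_eq_mul,
      mul_one]
  · rw [if_neg hd, if_neg]
    rintro rfl
    exact hd fun i => by rw [Finsupp.single_apply]; split_ifs <;> simp

namespace MvPowerSeries

variable {σ R : Type*}

section CommSemiring

variable [CommSemiring R]

theorem coeff_X_pow_mul_eq_ite [DecidableEq σ] (i : σ) (k : ℕ) (P : MvPowerSeries σ R)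
    (d : σ →₀ ℕ) :
    coeff d (X i ^ k * P) =
      if Finsupp.single i k ≤ d then coeff (d - Finsupp.single i k) P else 0 := by
  rw [X_pow_eq, coeff_monomial_mul]
  split <;> simp

theorem coeff_X_pow_mul_eq_zero_of_lt {i : σ} {k : ℕ} (P : MvPowerSeries σ R) {d : σ →₀ ℕ}
    (h : d i < k) : coeff d (X i ^ k * P) = 0 := by
  classical
  rw [coeff_X_pow_mul_eq_ite, if_neg (Finsupp.single_le_iff.not.mpr h.not_ge)]

theorem le_of_coeff_X_pow_mul_ne_zero {i : σ} {k : ℕ} {P : MvPowerSeries σ R} {d : σ →₀ ℕ}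
    (h : coeff d (X i ^ k * P) ≠ 0) : k ≤ d i :=
  not_lt.mp fun hlt => h (coeff_X_pow_mul_eq_zero_of_lt P hlt)

theorem coeff_single_X_pow_mul (i : σ) (k : ℕ) (P : MvPowerSeries σ R) :
    coeff (Finsupp.single i k) (X i ^ k * P) = constantCoeff P := by
  classical
  rw [coeff_X_pow_mul_eq_ite, if_pos le_rfl, tsub_self, coeff_zero_eq_constantCoeff]

end CommSemiring

theorem le_of_eval₂_X_pow_mul_eq_zero [CommRing R] [NoZeroDivisors R] {S : Type*} [CommRing S]
    (φ : S →+* MvPowerSeries σ R) (i : σ) {m a : ℕ} {g : MvPowerSeries σ R}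
    (hg : constantCoeff g ≠ 0) {F : Polynomial S} (hF : F.Monic)
    (hdiv : ∀ l < F.natDegree, X i ^ (m * (F.natDegree - l)) ∣ φ (F.coeff l))
    (hroot : F.eval₂ φ (X i ^ a * g) = 0) : m ≤ a := by
  by_contra! ham
  set n := F.natDegree
  have hlower : ∀ l ∈ Finset.range n,
      coeff (Finsupp.single i (a * n)) (φ (F.coeff l) * (X i ^ a * g) ^ l) = 0 := by
    intro l hl
    rw [Finset.mem_range] at hl
    obtain ⟨b, hb⟩ := hdiv l hl
    have hlt : a * n < m * (n - l) + a * l :=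
      calc a * n = a * (n - l) + a * l := by
            rw [← mul_add, Nat.sub_add_cancel hl.le]
        _ < m * (n - l) + a * l := Nat.add_lt_add_right
            (Nat.mul_lt_mul_of_pos_right ham (Nat.sub_pos_of_lt hl)) _
    rw [hb, mul_pow, ← pow_mul, mul_mul_mul_comm, ← pow_add]
    exact coeff_X_pow_mul_eq_zero_of_lt _ (by simpa using hlt)
  have htop : coeff (Finsupp.single i (a * n)) ((X i ^ a * g) ^ n) = constantCoeff g ^ n := by
    rw [mul_pow, ← pow_mul, coeff_single_X_pow_mul, map_pow]
  have hcoeff := congrArg (coeff (Finsupp.single i (a * n))) hroot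
  rw [Polynomial.eval₂_eq_sum_range, Finset.sum_range_succ, map_add, map_sum,
    Finset.sum_eq_zero hlower, zero_add, hF.coeff_natDegree, map_one, one_mul, htop,
    map_zero] at hcoeff
  exact pow_ne_zero n hg hcoeff

end MvPowerSeries

theorem equimultiple_XZ_forces_exponents_general
    (m n a : ℕ) (hm : 1 ≤ m)
    (g ζ : MvPowerSeries (Fin 2) ℂ)
    (hg : MvPowerSeries.constantCoeff g ≠ 0)
    (hζ : ζ = MvPowerSeries.X 0 ^ a * g)
    (φ : MvPowerSeries (Fin 2) ℂ →+* MvPowerSeries (Fin 2) ℂ)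
    (hφ : ∀ P, φ P = substPow m P)
    (F : Polynomial (MvPowerSeries (Fin 2) ℂ))
    (hFmonic : F.Monic) (hFdeg : F.natDegree = n)
    (hroot : F.eval₂ φ ζ = 0)
    (hdiv : ∀ l, l < n → MvPowerSeries.X 0 ^ (n - l) ∣ F.coeff l) :
    ∀ d : Fin 2 →₀ ℕ, MvPowerSeries.coeff d ζ ≠ 0 → m ≤ d 0 := by
  subst hFdeg hζ
  have hφX : φ (MvPowerSeries.X 0) = MvPowerSeries.X 0 ^ m := by rw [hφ, substPow_X_zero hm]
  have hma : m ≤ a := MvPowerSeries.le_of_eval₂_X_pow_mul_eq_zero φ 0 hg hFmonic (fun l hl => by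
    simpa only [map_pow, hφX, ← pow_mul] using map_dvd φ (hdiv l hl)) hroot
  exact fun d hd => hma.trans (MvPowerSeries.le_of_coeff_X_pow_mul_ne_zero hd)

/-- Let `ζ = U^a g(U,V)` with `g` a unit and `a ≥ 1`, a root of a monic polynomial
`F(Z) = Z^n + Σ_{l<n} a_l(X,Y) Z^l` over `ℂ[[X,Y]]` via `X = U^m, Y = V^m`. If
`X^{n-l} ∣ a_l` for all `l < n` (i.e. `(X,Z)` is equimultiple of order `n`), then every
exponent `(i,j)` appearing in `ζ` satisfies `i ≥ m`. -/
theorem equimultiple_XZ_forces_exponents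
    (m n a : ℕ) (hm : 1 ≤ m) (hn : 1 ≤ n) (ha : 1 ≤ a)
    (g ζ : MvPowerSeries (Fin 2) ℂ)
    (hg : MvPowerSeries.constantCoeff g ≠ 0)
    (hζ : ζ = MvPowerSeries.X 0 ^ a * g)
    (φ : MvPowerSeries (Fin 2) ℂ →+* MvPowerSeries (Fin 2) ℂ)
    (hφ : ∀ P, φ P = substPow m P)
    (F : Polynomial (MvPowerSeries (Fin 2) ℂ))
    (hFmonic : F.Monic) (hFdeg : F.natDegree = n)
    (hroot : F.eval₂ φ ζ = 0)
    (hdiv : ∀ l, l < n → MvPowerSeries.X 0 ^ (n - l) ∣ F.coeff l) :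
    ∀ d : Fin 2 →₀ ℕ, MvPowerSeries.coeff d ζ ≠ 0 → m ≤ d 0 :=
  equimultiple_XZ_forces_exponents_general m n a hm g ζ hg hζ φ hφ F hFmonic hFdeg hroot hdiv
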